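/- If p, q, l, m ∈ {1, …, k} satisfy a_p - a_q = -a_l - a_m, then B_{pk}·star(C_{qk}) = star(C_{lk})·star(C_{mk}). (This is the pre-antipode form of the paper's Lemma 3.6, obtained by comparing the coefficient of χ_{2a_k} on both sides of α(χ_{a_p})·α(χ_{-a_q}) = α(χ_{-a_l})·α(χ_{-a_m}).) -/

import Mathlib

/-- The character `χ_n : 𝕋 → ℂ`, `χ_n z = z ^ n`, as a continuous map on the
circle group `𝕋 = {z ∈ ℂ : |z| = 1}`. -/
noncomputable def chi (n : ℤ) : C(Circle, ℂ) :=
  { toFun := fun z => ((z ^ n : Circle) : ℂ)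
    continuous_toFun := by
      exact continuous_induced_dom.comp (continuous_zpow n) }

/-!
Since `α` is a ⋆-homomorphism and `a_p - a_q = -a_l - a_m`, the functions
`α χ_{a_p} · (α χ_{a_q})⋆` and `(α χ_{a_l})⋆ · (α χ_{a_m})⋆` agree. Both are evaluations on the
circle of products of two Laurent polynomials in `Q[ℤ]` whose exponents lie in `[-a_k, a_k]`.
Evaluation on the circle is injective (Fourier coefficients recover the coefficients), so the two
products agree in `Q[ℤ]`, and their coefficients at `2 a_k` are equal. That exponent is reached
only as `a_k + a_k`, so each coefficient is the product of the two top coefficients.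
-/

open AddMonoidAlgebra AddCircle MeasureTheory

theorem chi_add (m n : ℤ) : chi (m + n) = chi m * chi n := by
  ext z
  simp [chi, zpow_add]

theorem star_chi (n : ℤ) : star (chi n) = chi (-n) := by
  ext z
  change star ((z ^ n : Circle) : ℂ) = ((z ^ (-n) : Circle) : ℂ)
  rw [zpow_neg, Circle.coe_inv_eq_conj]
  rfl

theorem chi_toCircle {T : ℝ} (n : ℤ) (x : AddCircle T) : chi n (toCircle x) = fourier n x := by
  rw [fourier_apply, toCircle_zsmul]
  rfl

theorem AddMonoidAlgebra.coeff_mul_add_self_of_coeff_eq_zero {R G : Type*} [Semiring R]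
    [AddCommMonoid G] [LinearOrder G] [IsOrderedCancelAddMonoid G] {f g : R[G]} {M : G}
    (hf : ∀ n, M < n → f.coeff n = 0) (hg : ∀ n, M < n → g.coeff n = 0) :
    (f * g).coeff (M + M) = f.coeff M * g.coeff M := by
  refine coeff_mul_add_of_uniqueAdd fun a b ha hb hab => ?_
  have haM : a ≤ M := not_lt.1 fun h => Finsupp.mem_support_iff.1 ha (hf a h)
  have hbM : b ≤ M := not_lt.1 fun h => Finsupp.mem_support_iff.1 hb (hg b h)
  exact ⟨haM.eq_of_not_lt fun h => (add_lt_add_of_lt_of_le h hbM).ne hab,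
    hbM.eq_of_not_lt fun h => (add_lt_add_of_le_of_lt haM h).ne hab⟩

section circleEval

variable {Q : Type*} [NormedRing Q] [NormedAlgebra ℂ Q]

theorem fourierCoeff_fourier_smul [CompleteSpace Q] {T : ℝ} [Fact (0 < T)] (m n : ℤ) (v : Q) :
    fourierCoeff (fun x : AddCircle T => fourier m x • v) n = (Pi.single m v : ℤ → Q) n := by
  classical
  have hsmul : fourierCoeff (fun x : AddCircle T => fourier m x • v) n
      = fourierCoeff (T := T) (fourier m) n • v := by
    simp only [fourierCoeff, smul_smul, integral_smul_const, smul_eq_mul]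
  rw [hsmul, fourierCoeff_fourier, Pi.single_apply, Pi.single_apply]
  split_ifs <;> simp

theorem fourierCoeff_sum_fourier_smul [CompleteSpace Q] {T : ℝ} [Fact (0 < T)] (s : Finset ℤ)
    (c : ℤ → Q) (n : ℤ) :
    fourierCoeff (fun x : AddCircle T => ∑ m ∈ s, fourier m x • c m) n
      = if n ∈ s then c n else 0 := by
  classical
  rw [← Finset.sum_fn, fourierCoeff.sum, Finset.sum_apply]
  · simp_rw [fourierCoeff_fourier_smul, Finset.sum_pi_single]
  · exact fun m _ => ((map_continuous (fourier m)).smul continuous_const)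
      |>.integrable_of_hasCompactSupport (.of_compactSpace _)

/-- Evaluation at `z`; it is multiplicative because `z` acts on `Q` through the central
`algebraMap ℂ Q`. -/
noncomputable def circleEval (z : Circle) : Q[ℤ] →+* Q :=
  liftNCRingHom (RingHom.id Q)
    (((algebraMap ℂ Q : ℂ →* Q).comp Circle.coeHom).comp (zpowersHom Circle z))
    fun _ _ => Algebra.commute_algebraMap_right _ _

theorem circleEval_single (z : Circle) (n : ℤ) (v : Q) :
    circleEval z (single n v) = chi n z • v :=
  (liftNCRingHom_single _ _ _ n v).trans
    ((Algebra.commutes _ _).symm.trans (Algebra.smul_def _ _).symm)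

theorem circleEval_apply (z : Circle) (f : Q[ℤ]) :
    circleEval z f = ∑ n ∈ f.coeff.support, chi n z • f.coeff n := by
  conv_lhs => rw [← f.sum_coeff_single]
  rw [map_finsuppSum]
  simp only [circleEval_single, Finsupp.sum]

theorem fourierCoeff_circleEval [CompleteSpace Q] {T : ℝ} [Fact (0 < T)] (f : Q[ℤ]) (n : ℤ) :
    fourierCoeff (fun x : AddCircle T => circleEval (toCircle x) f) n = f.coeff n := by
  simp_rw [circleEval_apply, chi_toCircle]
  rw [fourierCoeff_sum_fourier_smul, ite_eq_left_iff, Finsupp.notMem_support_iff]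
  exact Eq.symm

theorem circleEval_injective [CompleteSpace Q] :
    Function.Injective fun (f : Q[ℤ]) (z : Circle) => circleEval z f := by
  intro f g hfg
  have : Fact ((0 : ℝ) < 1) := ⟨one_pos⟩
  ext n
  rw [← fourierCoeff_circleEval (T := 1), ← fourierCoeff_circleEval (T := 1)]
  exact congrArg (fourierCoeff · n) (funext fun x => congrFun hfg (toCircle x))

end circleEval

section symmetricLaurent

variable {ι Q : Type*} [Fintype ι]

noncomputable def symmetricLaurent [Semiring Q] (a : ι → ℤ) (u w : ι → Q) : Q[ℤ] :=
  ∑ j, (single (a j) (u j) + single (-a j) (w j))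

theorem coeff_symmetricLaurent [Semiring Q] (a : ι → ℤ) (u w : ι → Q) (n : ℤ) :
    (symmetricLaurent a u w).coeff n
      = ∑ j, ((Finsupp.single (a j) (u j)) n + (Finsupp.single (-a j) (w j)) n) := by
  simp only [symmetricLaurent, coeff_sum, coeff_add, coeff_single, Finsupp.finsetSum_apply,
    Finsupp.add_apply]

theorem coeff_symmetricLaurent_of_lt [Semiring Q] {a : ι → ℤ} {M : ℤ} (ha : ∀ j, |a j| ≤ M)
    (u w : ι → Q) {n : ℤ} (hn : M < n) : (symmetricLaurent a u w).coeff n = 0 := by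
  rw [coeff_symmetricLaurent]
  refine Finset.sum_eq_zero fun j _ => ?_
  have := abs_le.1 (ha j)
  rw [Finsupp.single_eq_of_ne (by omega), Finsupp.single_eq_of_ne (by omega), add_zero]

theorem coeff_symmetricLaurent_self [Semiring Q] {a : ι → ℤ} (ha : Function.Injective a)
    (ha_pos : ∀ j, 0 < a j) (u w : ι → Q) (i : ι) :
    (symmetricLaurent a u w).coeff (a i) = u i := by
  classical
  have hi := ha_pos i
  rw [coeff_symmetricLaurent, Finset.sum_eq_single i]
  · rw [Finsupp.single_eq_same, Finsupp.single_eq_of_ne (by omega), add_zero]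
  · intro j _ hji
    have hj := ha_pos j
    rw [Finsupp.single_eq_of_ne (ha.ne hji.symm), Finsupp.single_eq_of_ne (by omega), add_zero]
  · simp

theorem coeff_mul_symmetricLaurent_add_self [Semiring Q] {a : ι → ℤ}
    (ha : Function.Injective a) (ha_pos : ∀ j, 0 < a j) {i : ι} (hi : ∀ j, a j ≤ a i)
    (u w u' w' : ι → Q) :
    (symmetricLaurent a u w * symmetricLaurent a u' w').coeff (a i + a i) = u i * u' i := by
  have hbound (j : ι) : |a j| ≤ a i := abs_le.2 ⟨by linarith [ha_pos i, ha_pos j], hi j⟩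
  rw [coeff_mul_add_self_of_coeff_eq_zero (fun _ => coeff_symmetricLaurent_of_lt hbound u w)
    (fun _ => coeff_symmetricLaurent_of_lt hbound u' w'), coeff_symmetricLaurent_self ha ha_pos,
    coeff_symmetricLaurent_self ha ha_pos]

theorem circleEval_symmetricLaurent [NormedRing Q] [NormedAlgebra ℂ Q] (a : ι → ℤ) (u w : ι → Q)
    (z : Circle) :
    circleEval z (symmetricLaurent a u w) = ∑ j, chi (a j) z • u j + ∑ j, chi (-a j) z • w j := by
  simp only [symmetricLaurent, map_sum, map_add, circleEval_single, Finset.sum_add_distrib]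

theorem star_circleEval_symmetricLaurent [NormedRing Q] [NormedAlgebra ℂ Q] [StarRing Q]
    [StarModule ℂ Q] (a : ι → ℤ) (u w : ι → Q) (z : Circle) :
    star (circleEval z (symmetricLaurent a u w))
      = circleEval z (symmetricLaurent a (star w) (star u)) := by
  have star_chi_apply (n : ℤ) : star (chi n z) = chi (-n) z := congrArg (· z) (star_chi n)
  simp only [circleEval_symmetricLaurent, star_add, star_sum, star_smul, star_chi_apply, neg_neg,
    Pi.star_apply]
  exact add_comm _ _

end symmetricLaurent

theorem stmt_4 {k : ℕ} (a : Fin (k + 1) → ℤ)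
    (ha_pos : ∀ i, 0 < a i) (ha_mono : StrictMono a)
    (Q : Type*) [NormedRing Q] [StarRing Q] [CStarRing Q]
    [NormedAlgebra ℂ Q] [StarModule ℂ Q] [CompleteSpace Q]
    (α : C(Circle, ℂ) →⋆ₐ[ℂ] C(Circle, Q))
    (B C : Fin (k + 1) → Fin (k + 1) → Q)
    (hα : ∀ i, ∀ z : Circle,
      α (chi (a i)) z
        = ∑ j, ((z ^ (a j) : Circle) : ℂ) • B i j
          + ∑ j, ((z ^ (-(a j)) : Circle) : ℂ) • C i j)
    (p q l m : Fin (k + 1)) (h : a p - a q = -a l - a m) :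
    B p (Fin.last k) * star (C q (Fin.last k))
      = star (C l (Fin.last k)) * star (C m (Fin.last k)) := by
  set P := fun i => symmetricLaurent a (B i) (C i)
  set P' := fun i => symmetricLaurent a (star (C i)) (star (B i))
  have hP (i : Fin (k + 1)) (z : Circle) : α (chi (a i)) z = circleEval z (P i) :=
    (hα i z).trans (circleEval_symmetricLaurent a (B i) (C i) z).symm
  have hP' (i : Fin (k + 1)) (z : Circle) : star (α (chi (a i))) z = circleEval z (P' i) := by
    rw [ContinuousMap.star_apply, hP, star_circleEval_symmetricLaurent]
  have hchi :
      α (chi (a p)) * star (α (chi (a q))) = star (α (chi (a l))) * star (α (chi (a m))) := by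
    rw [← map_star, ← map_star, ← map_star, ← map_mul, ← map_mul, star_chi, star_chi, star_chi,
      ← chi_add, ← chi_add, ← sub_eq_add_neg, h, sub_eq_add_neg]
  have key : P p * P' q = P' l * P' m := circleEval_injective <| funext fun z => by
    simpa only [map_mul, ContinuousMap.mul_apply, hP, hP'] using congrArg (· z) hchi
  have htop (j : Fin (k + 1)) : a j ≤ a (Fin.last k) := ha_mono.monotone (Fin.le_last j)
  simpa only [P, P', Pi.star_apply,
    coeff_mul_symmetricLaurent_add_self ha_mono.injective ha_pos htop]
    using congrArg (coeff · (a (Fin.last k) + a (Fin.last k))) key
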